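/- Let P be a Hermitian Pauli on n+ℓ qubits with P² = I anticommuting with Z_{n+k}. There exists, for each outcome a ∈ {0,1}, a unitary U_a (constructible as a product of the Clifford unitary U = (I+Z_{n+k})/2 + P X_{n+k}(I−Z_{n+k})/2, a Hadamard on qubit n+k, and possibly X or Z gates on qubit n+k) such that for every n-qubit unit vector |ψ⟩, U_a Π_a^P (|ψ⟩⊗|0⟩^⊗ℓ) = (1/√2)·(|ψ⟩⊗|0⟩^⊗ℓ) up to a global phase, where Π_a^P = (I+(−1)^a P)/2. -/

import Mathlib

open Matrix Complex

noncomputable section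

abbrev Qb := Fin 2
/-- The computational basis labels of an `m`-qubit register. -/
abbrev QReg (m : ℕ) := Fin m → Fin 2

def PX : Matrix Qb Qb ℂ := !![0, 1; 1, 0]
def PY : Matrix Qb Qb ℂ := !![0, -Complex.I; Complex.I, 0]
def PZ : Matrix Qb Qb ℂ := !![1, 0; 0, -1]

def PauliSet : Set (Matrix Qb Qb ℂ) := {1, PX, PY, PZ}

/-- Tensor product over all qubits of single-qubit operators. -/
def prodPauli {m : ℕ} (Ps : Fin m → Matrix Qb Qb ℂ) :
    Matrix (QReg m) (QReg m) ℂ :=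
  fun v w => ∏ i, Ps i (v i) (w i)

/-- Membership in the `m`-qubit Pauli group: a phase ±1, ±i times a tensor
product of single-qubit Paulis. -/
def IsPauliGen {m : ℕ} (P : Matrix (QReg m) (QReg m) ℂ) : Prop :=
  ∃ (c : ℂ) (Ps : Fin m → Matrix Qb Qb ℂ),
    (c = 1 ∨ c = -1 ∨ c = Complex.I ∨ c = -Complex.I) ∧
    (∀ i, Ps i ∈ PauliSet) ∧ P = c • prodPauli Ps

/-- The single-qubit operator `A` acting on qubit `j` (identity elsewhere). -/
def singleOp {m : ℕ} (j : Fin m) (A : Matrix Qb Qb ℂ) :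
    Matrix (QReg m) (QReg m) ℂ :=
  prodPauli (fun i => if i = j then A else 1)

/-- The state `|ψ⟩ ⊗ |0⟩^⊗ℓ` on `n + ℓ` qubits. -/
def embed (n ℓ : ℕ) (ψ : QReg n → ℂ) : QReg (n + ℓ) → ℂ :=
  fun v => ψ (fun i => v (Fin.castAdd ℓ i)) *
    ∏ j : Fin ℓ, (if v (Fin.natAdd n j) = 0 then 1 else 0)

/-- Inner product ⟨v|w⟩. -/
def innerG {m : ℕ} (v w : QReg m → ℂ) : ℂ := ∑ x, star (v x) * w x

/-- The projector `Π_a^P = (I + (−1)^a P)/2` onto outcome `a` of measuring `P`. -/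
def projP {m : ℕ} (P : Matrix (QReg m) (QReg m) ℂ) (a : Fin 2) :
    Matrix (QReg m) (QReg m) ℂ :=
  (2⁻¹ : ℂ) • (1 + ((-1 : ℂ) ^ (a : ℕ)) • P)

/-- Hadamard gate. -/
def Hgate : Matrix Qb Qb ℂ :=
  ((Real.sqrt 2 : ℂ))⁻¹ • !![1, 1; 1, -1]

lemma prodPauli_mul {m : ℕ} (Ps Qs : Fin m → Matrix Qb Qb ℂ) :
    prodPauli Ps * prodPauli Qs = prodPauli (fun i => Ps i * Qs i) := by
  ext v w
  simp only [Matrix.mul_apply, prodPauli, Matrix.mul_apply]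
  rw [Finset.prod_univ_sum, Fintype.piFinset_univ]
  exact Finset.sum_congr rfl fun x _ => (Finset.prod_mul_distrib).symm

lemma prodPauli_one {m : ℕ} : prodPauli (fun _ : Fin m => (1 : Matrix Qb Qb ℂ)) = 1 := by
  ext v w
  simp only [prodPauli, Matrix.one_apply]
  by_cases h : v = w
  · subst h; simp
  · obtain ⟨i, hi⟩ := Function.ne_iff.mp h
    rw [if_neg h]
    exact Finset.prod_eq_zero (Finset.mem_univ i) (by simp [Matrix.one_apply, hi])

lemma prodPauli_smul {m : ℕ} (c : Fin m → ℂ) (Ps : Fin m → Matrix Qb Qb ℂ) :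
    prodPauli (fun i => c i • Ps i) = (∏ i, c i) • prodPauli Ps := by
  ext v w
  simp [prodPauli, Finset.prod_mul_distrib, Matrix.smul_apply, smul_eq_mul]

lemma prodPauli_conjTranspose {m : ℕ} (Ps : Fin m → Matrix Qb Qb ℂ) :
    (prodPauli Ps)ᴴ = prodPauli (fun i => (Ps i)ᴴ) := by
  ext v w
  simp [prodPauli, Matrix.conjTranspose_apply, star_prod]

lemma singleOp_mul {m : ℕ} (j : Fin m) (A B : Matrix Qb Qb ℂ) :
    singleOp j A * singleOp j B = singleOp j (A * B) := by
  rw [singleOp, singleOp, prodPauli_mul, singleOp]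
  have : (fun i => (if i = j then A else 1) * (if i = j then B else 1))
      = fun i => if i = j then A * B else (1 : Matrix Qb Qb ℂ) := by
    funext i; by_cases h : i = j <;> simp [h]
  rw [this]

lemma singleOp_one {m : ℕ} (j : Fin m) : singleOp j (1 : Matrix Qb Qb ℂ) = 1 := by
  rw [singleOp, show (fun i => if i = j then (1 : Matrix Qb Qb ℂ) else 1) = fun _ => 1 by
    funext i; split <;> rfl, prodPauli_one]

lemma singleOp_conjTranspose {m : ℕ} (j : Fin m) (A : Matrix Qb Qb ℂ) :
    (singleOp j A)ᴴ = singleOp j Aᴴ := by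
  rw [singleOp, prodPauli_conjTranspose, singleOp]
  have : (fun i => (if i = j then A else 1)ᴴ)
      = fun i => if i = j then Aᴴ else (1 : Matrix Qb Qb ℂ) := by
    funext i; by_cases h : i = j <;> simp [h]
  rw [this]

lemma sqrt2_ne : ((Real.sqrt 2 : ℝ) : ℂ) ≠ 0 := by
  norm_cast
  positivity

lemma sqrt2_sq : ((Real.sqrt 2 : ℝ) : ℂ) * ((Real.sqrt 2 : ℝ) : ℂ) = 2 := by
  norm_cast
  rw [Real.mul_self_sqrt (by norm_num : (0:ℝ) ≤ 2)]

lemma PZ_mul_PZ : PZ * PZ = 1 := by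
  norm_num [PZ, Matrix.mul_fin_two, ← Matrix.one_fin_two]

lemma PX_mul_PX : PX * PX = 1 := by
  norm_num [PX, Matrix.mul_fin_two, ← Matrix.one_fin_two]

lemma PZ_PX_anti : PZ * PX = -(PX * PZ) := by
  norm_num [PX, PZ, Matrix.mul_fin_two]

lemma PZ_herm : PZᴴ = PZ := by
  ext i j
  fin_cases i <;> fin_cases j <;> simp [PZ]

lemma PX_herm : PXᴴ = PX := by
  ext i j
  fin_cases i <;> fin_cases j <;> simp [PX]

lemma Hgate_herm : Hgateᴴ = Hgate := by
  ext i j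
  fin_cases i <;> fin_cases j <;>
    simp [Hgate, Matrix.conjTranspose_apply, Complex.ext_iff]

lemma Hgate_mul_Hgate : Hgate * Hgate = 1 := by
  ext i j
  fin_cases i <;> fin_cases j <;>
    simp [Hgate, Matrix.mul_apply, Fin.sum_univ_succ, Matrix.one_apply,
      ← mul_inv, sqrt2_sq] <;> norm_num [← mul_inv, sqrt2_sq]

lemma Hgate_mul_PX : Hgate * PX = PZ * Hgate := by
  ext i j
  fin_cases i <;> fin_cases j <;>
    simp [Hgate, PX, PZ, Matrix.mul_apply, Fin.sum_univ_succ]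

/-- Two single-qubit Paulis commute or anticommute. -/
lemma pauli_comm_or_anti {A B : Matrix Qb Qb ℂ} (hA : A ∈ PauliSet) (hB : B ∈ PauliSet) :
    ∃ ε : ℂ, ε * ε = 1 ∧ A * B = ε • (B * A) := by
  rcases hA with rfl | rfl | rfl | rfl <;> rcases hB with rfl | rfl | rfl | rfl <;>
    first
    | (refine ⟨1, by norm_num, ?_⟩
       ext i j
       fin_cases i <;> fin_cases j <;>
         simp [PX, PY, PZ, Matrix.mul_apply, Fin.sum_univ_succ, Matrix.one_apply,
           one_smul] <;> ring1)
    | (refine ⟨-1, by norm_num, ?_⟩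
       rw [neg_one_smul]
       ext i j
       fin_cases i <;> fin_cases j <;>
         simp [PX, PY, PZ, Matrix.mul_apply, Fin.sum_univ_succ, Matrix.one_apply,
           Matrix.neg_apply] <;> ring1)

/-- Two Pauli products commute or anticommute. -/
lemma prodPauli_comm_or_anti {m : ℕ} {Ps Qs : Fin m → Matrix Qb Qb ℂ}
    (hPs : ∀ i, Ps i ∈ PauliSet) (hQs : ∀ i, Qs i ∈ PauliSet) :
    ∃ ε : ℂ, ε * ε = 1 ∧
      prodPauli Ps * prodPauli Qs = ε • (prodPauli Qs * prodPauli Ps) := by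
  choose e he1 he2 using fun i => pauli_comm_or_anti (hPs i) (hQs i)
  refine ⟨∏ i, e i, ?_, ?_⟩
  · rw [← Finset.prod_mul_distrib]
    exact Finset.prod_eq_one fun i _ => he1 i
  · rw [prodPauli_mul, prodPauli_mul]
    have : (fun i => Ps i * Qs i) = fun i => e i • (Qs i * Ps i) := by
      funext i; exact he2 i
    rw [this, prodPauli_smul]

lemma singleOp_mulVec {m : ℕ} (j : Fin m) (A : Matrix Qb Qb ℂ) (f : QReg m → ℂ)
    (v : QReg m) :
    (singleOp j A).mulVec f v = ∑ b : Qb, A (v j) b * f (Function.update v j b) := by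
  classical
  rw [Matrix.mulVec, dotProduct]
  have key : ∀ w : QReg m, singleOp j A v w * f w
      = ∑ b : Qb, if w = Function.update v j b then A (v j) b * f w else 0 := by
    intro w
    by_cases h : ∀ i, i ≠ j → w i = v i
    · have hlhs : singleOp j A v w = A (v j) (w j) := by
        rw [singleOp, prodPauli]
        rw [Finset.prod_eq_single_of_mem j (Finset.mem_univ j)]
        · simp
        · intro i _ hi
          simp [hi, Matrix.one_apply, h i hi]
      have hiff : ∀ b : Qb, (w = Function.update v j b) ↔ b = w j := by
        intro b
        constructor
        · intro hw; rw [hw]; simp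
        · intro hb
          funext i
          by_cases hi : i = j
          · subst hi; simp [hb]
          · simp [Function.update, hi, h i hi]
      calc singleOp j A v w * f w = A (v j) (w j) * f w := by rw [hlhs]
        _ = ∑ b : Qb, if b = w j then A (v j) b * f w else 0 := by
            rw [Finset.sum_ite_eq' Finset.univ (w j) (fun b => A (v j) b * f w)]
            simp
        _ = _ := Finset.sum_congr rfl fun b _ => by
            rw [if_congr (hiff b).symm rfl rfl]
    · push_neg at h
      obtain ⟨i, hij, hiw⟩ := h
      have hlhs : singleOp j A v w = 0 := by
        rw [singleOp, prodPauli]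
        refine Finset.prod_eq_zero (Finset.mem_univ i) ?_
        simp only [hij, if_false, Matrix.one_apply]
        rw [if_neg (fun hh => hiw hh.symm)]
      have hrhs : ∀ b : Qb, ¬(w = Function.update v j b) := by
        intro b hw
        exact hiw (by rw [hw]; simp [Function.update, hij])
      rw [hlhs, zero_mul]
      exact (Finset.sum_eq_zero fun b _ => if_neg (hrhs b)).symm
  rw [Finset.sum_congr rfl fun w _ => key w, Finset.sum_comm]
  refine Finset.sum_congr rfl fun b _ => ?_
  rw [Finset.sum_eq_single_of_mem (Function.update v j b) (Finset.mem_univ _)]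
  · simp
  · intro w _ hw
    exact if_neg hw

lemma embed_eq_zero {n ℓ : ℕ} (k : Fin ℓ) (ψ : QReg n → ℂ) (v : QReg (n + ℓ))
    (h : v (Fin.natAdd n k) ≠ 0) : embed n ℓ ψ v = 0 := by
  have hz : (∏ j : Fin ℓ, if v (Fin.natAdd n j) = 0 then (1:ℂ) else 0) = 0 :=
    Finset.prod_eq_zero (Finset.mem_univ k) (if_neg h)
  rw [embed, hz, mul_zero]

lemma Z_embed {n ℓ : ℕ} (k : Fin ℓ) (ψ : QReg n → ℂ) :
    (singleOp (Fin.natAdd n k) PZ).mulVec (embed n ℓ ψ) = embed n ℓ ψ := by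
  set j := Fin.natAdd n k with hj
  funext v
  rw [singleOp_mulVec, Fin.sum_univ_two]
  have h1 : embed n ℓ ψ (Function.update v j 1) = 0 :=
    embed_eq_zero k ψ _ (by simp [hj])
  rw [h1, mul_zero, add_zero]
  have hv : v j = 0 ∨ v j = 1 := by omega
  rcases hv with h0 | h0
  · rw [← h0, Function.update_eq_self, h0]
    norm_num [PZ]
  · rw [embed_eq_zero k ψ v (by rw [h0]; exact one_ne_zero), h0]
    norm_num [PZ]

lemma H_embed {n ℓ : ℕ} (k : Fin ℓ) (f : QReg (n + ℓ) → ℂ)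
    (hzero : ∀ v, v (Fin.natAdd n k) ≠ 0 → f v = 0) :
    (singleOp (Fin.natAdd n k) Hgate).mulVec f
      = ((Real.sqrt 2 : ℂ))⁻¹ • (f + (singleOp (Fin.natAdd n k) PX).mulVec f) := by
  set j := Fin.natAdd n k with hj
  funext v
  have h1 : f (Function.update v j 1) = 0 := hzero _ (by simp [hj])
  simp only [Pi.smul_apply, Pi.add_apply, singleOp_mulVec, Fin.sum_univ_two, h1,
    mul_zero, add_zero]
  have hv : v j = 0 ∨ v j = 1 := by omega
  rcases hv with h0 | h0
  · have hu : Function.update v j 0 = v := by rw [← h0, Function.update_eq_self]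
    rw [h0, hu]
    norm_num [Hgate, PX, smul_eq_mul]
  · have hfv : f v = 0 := hzero v (by rw [h0]; exact one_ne_zero)
    rw [h0, hfv]
    norm_num [Hgate, PX, smul_eq_mul]

section
variable {R : Type*} [Ring R] [Algebra ℂ R]

lemma unitary_aux (z x p : R)
    (hz : z * z = 1) (hx : x * x = 1) (hp : p * p = 1)
    (hzx : z * x = -(x * z)) (hpz : p * z = -(z * p)) :
    ((2⁻¹ : ℂ) • (1 + z) + (2⁻¹ : ℂ) • (1 - z) * x * p)
      * ((2⁻¹ : ℂ) • (1 + z) + p * x * ((2⁻¹ : ℂ) • (1 - z))) = 1 := by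
  set A : R := (2⁻¹ : ℂ) • (1 + z) with hA
  set B : R := (2⁻¹ : ℂ) • (1 - z) with hB
  have hzp : z * p = -(p * z) := by rw [hpz, neg_neg]
  have hxz : x * z = -(z * x) := by rw [hzx, neg_neg]
  have hAB : A + B = 1 := by
    rw [hA, hB, ← smul_add]
    have h2 : (1 + z) + (1 - z) = (2 : ℂ) • (1 : R) := by
      rw [two_smul]; abel
    rw [h2, smul_smul]
    norm_num
  have hBB : B * B = B := by
    rw [hB, smul_mul_assoc, mul_smul_comm, smul_smul]
    rw [sub_mul, one_mul, mul_sub, mul_one, hz]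
    have h2 : (1 : R) - z - (z - 1) = (2:ℂ) • (1 - z) := by rw [two_smul]; abel
    rw [h2, smul_smul]
    norm_num
  have hAA : A * A = A := by
    rw [hA, smul_mul_assoc, mul_smul_comm, smul_smul]
    rw [add_mul, one_mul, mul_add, mul_one, hz]
    have h2 : (1 : R) + z + (z + 1) = (2:ℂ) • (1 + z) := by rw [two_smul]; abel
    rw [h2, smul_smul]
    norm_num
  have hBA : B * A = 0 := by
    rw [hA, hB, smul_mul_assoc, mul_smul_comm, smul_smul]
    rw [sub_mul, one_mul, mul_add, mul_one, hz]
    have h2 : (1 : R) + z - (z + 1) = 0 := by abel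
    rw [h2, smul_zero]
  have hAp : A * p = p * B := by
    rw [hA, hB, smul_mul_assoc, mul_smul_comm]
    congr 1
    rw [add_mul, one_mul, mul_sub, mul_one, hzp]
    abel
  have hpA : p * A = B * p := by
    rw [hA, hB, mul_smul_comm, smul_mul_assoc]
    congr 1
    rw [mul_add, mul_one, sub_mul, one_mul, hpz]
    abel
  have hxB : x * B = A * x := by
    rw [hA, hB, mul_smul_comm, smul_mul_assoc]
    congr 1
    rw [mul_sub, mul_one, add_mul, one_mul, hxz]
    abel
  have t2 : A * (p * x * B) = 0 := by
    calc A * (p * x * B) = (A * p) * (x * B) := by noncomm_ring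
      _ = (p * B) * (A * x) := by rw [hAp, hxB]
      _ = p * ((B * A) * x) := by noncomm_ring
      _ = 0 := by rw [hBA, zero_mul, mul_zero]
  have t3 : B * x * p * A = 0 := by
    calc B * x * p * A = B * (x * (p * A)) := by noncomm_ring
      _ = B * (x * (B * p)) := by rw [hpA]
      _ = (B * (x * B)) * p := by noncomm_ring
      _ = (B * (A * x)) * p := by rw [hxB]
      _ = ((B * A) * x) * p := by noncomm_ring
      _ = 0 := by rw [hBA, zero_mul, zero_mul]
  have t4 : B * x * (p * p) * x * B = B := by
    calc B * x * (p * p) * x * B = B * (x * x) * B := by rw [hp, mul_one]; noncomm_ring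
      _ = B := by rw [hx, mul_one, hBB]
  calc (A + B * x * p) * (A + p * x * B)
      = A * A + A * (p * x * B) + B * x * p * A + B * x * (p * p) * x * B := by
        noncomm_ring
    _ = A + 0 + 0 + B := by rw [hAA, t2, t3, t4]
    _ = 1 := by rw [add_zero, add_zero, hAB]
end


lemma singleOp_smul {m : ℕ} (j : Fin m) (c : ℂ) (A : Matrix Qb Qb ℂ) :
    singleOp j (c • A) = c • singleOp j A := by
  rw [singleOp, singleOp]
  have h : (fun i => if i = j then c • A else (1 : Matrix Qb Qb ℂ))
      = fun i => (if i = j then c else 1) • (if i = j then A else 1) := by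
    funext i; by_cases h : i = j <;> simp [h]
  rw [h, prodPauli_smul]
  congr 1
  simp [Finset.prod_ite_eq']

lemma singleOp_neg {m : ℕ} (j : Fin m) (A : Matrix Qb Qb ℂ) :
    singleOp j (-A) = -(singleOp j A) := by
  rw [show -A = (-1 : ℂ) • A by simp, singleOp_smul, neg_one_smul]

/-- for a Hermitian Pauli `P` (with `P² = I`) anticommuting with
`Z_{n+k}`, for each outcome `a` there is a unitary `U_a`, a product of
`U = (I+Z_{n+k})/2 + P X_{n+k} (I−Z_{n+k})/2`, a Hadamard on qubit `n+k`, and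
possibly `X` or `Z` gates on qubit `n+k`, that reverses the measurement effect:
`U_a Π_a^P (|ψ⟩⊗|0⟩^⊗ℓ) = (1/√2)(|ψ⟩⊗|0⟩^⊗ℓ)` up to a global phase, for every
`n`-qubit unit vector `|ψ⟩`. -/
theorem stmt9 (n ℓ : ℕ) (k : Fin ℓ) (P : Matrix (QReg (n + ℓ)) (QReg (n + ℓ)) ℂ)
    (hP : IsPauliGen P) (hHerm : P.IsHermitian) (hsq : P * P = 1)
    (hanti : P * singleOp (Fin.natAdd n k) PZ
      = -(singleOp (Fin.natAdd n k) PZ * P)) (a : Fin 2) :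
    ∃ Ua : Matrix (QReg (n + ℓ)) (QReg (n + ℓ)) ℂ,
      Uaᴴ * Ua = 1 ∧
      Ua ∈ Submonoid.closure
        ({ (2⁻¹ : ℂ) • ((1 : Matrix (QReg (n + ℓ)) (QReg (n + ℓ)) ℂ)
              + singleOp (Fin.natAdd n k) PZ)
            + P * singleOp (Fin.natAdd n k) PX *
              ((2⁻¹ : ℂ) • ((1 : Matrix (QReg (n + ℓ)) (QReg (n + ℓ)) ℂ)
                - singleOp (Fin.natAdd n k) PZ)),
           singleOp (Fin.natAdd n k) Hgate,
           singleOp (Fin.natAdd n k) PX,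
           singleOp (Fin.natAdd n k) PZ } :
          Set (Matrix (QReg (n + ℓ)) (QReg (n + ℓ)) ℂ)) ∧
      ∀ ψ : QReg n → ℂ, innerG ψ ψ = 1 →
        ∃ c : ℂ, ‖c‖ = 1 ∧
          Ua.mulVec ((projP P a).mulVec (embed n ℓ ψ))
            = (c * ((Real.sqrt 2 : ℂ))⁻¹) • embed n ℓ ψ := by
  classical
  set j : Fin (n + ℓ) := Fin.natAdd n k with hj
  set Zg := singleOp j PZ with hZgdef
  set Xg := singleOp j PX with hXgdef
  set Hg := singleOp j Hgate with hHgdef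
  set U : Matrix (QReg (n + ℓ)) (QReg (n + ℓ)) ℂ :=
    (2⁻¹ : ℂ) • (1 + Zg) + P * Xg * ((2⁻¹ : ℂ) • (1 - Zg)) with hU
  -- matrix identities
  have hZZ : Zg * Zg = 1 := by rw [hZgdef, singleOp_mul, PZ_mul_PZ, singleOp_one]
  have hXX : Xg * Xg = 1 := by rw [hXgdef, singleOp_mul, PX_mul_PX, singleOp_one]
  have hHH : Hg * Hg = 1 := by rw [hHgdef, singleOp_mul, Hgate_mul_Hgate, singleOp_one]
  have hZher : Zgᴴ = Zg := by rw [hZgdef, singleOp_conjTranspose, PZ_herm]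
  have hXher : Xgᴴ = Xg := by rw [hXgdef, singleOp_conjTranspose, PX_herm]
  have hHher : Hgᴴ = Hg := by rw [hHgdef, singleOp_conjTranspose, Hgate_herm]
  have hZX : Zg * Xg = -(Xg * Zg) := by
    rw [hZgdef, hXgdef, singleOp_mul, singleOp_mul, PZ_PX_anti, singleOp_neg]
  have hHX : Hg * Xg = Zg * Hg := by
    rw [hZgdef, hXgdef, hHgdef, singleOp_mul, singleOp_mul, Hgate_mul_PX]
  -- commuting constant
  obtain ⟨ε, hε2, hPXc⟩ : ∃ ε : ℂ, ε * ε = 1 ∧ P * Xg = ε • (Xg * P) := by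
    obtain ⟨c, Ps, hc, hPs, hPeq⟩ := hP
    have hXs : ∀ i, (fun i => if i = j then PX else (1 : Matrix Qb Qb ℂ)) i ∈ PauliSet := by
      intro i
      by_cases h : i = j <;> simp [h, PauliSet]
    obtain ⟨ε, h1, h2⟩ := prodPauli_comm_or_anti hPs hXs
    refine ⟨ε, h1, ?_⟩
    have hXeq : Xg = prodPauli (fun i => if i = j then PX else 1) := rfl
    rw [hPeq, hXeq, smul_mul_assoc, h2, mul_smul_comm, smul_comm]
  -- unitarity of U
  have hUconj : Uᴴ = (2⁻¹ : ℂ) • (1 + Zg) + (2⁻¹ : ℂ) • (1 - Zg) * Xg * P := by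
    rw [hU]
    simp only [conjTranspose_add, conjTranspose_smul, conjTranspose_mul,
      conjTranspose_sub, conjTranspose_one, hZher, hXher, hHerm.eq]
    have hstar : star (2⁻¹ : ℂ) = 2⁻¹ := by norm_num
    rw [hstar]
    noncomm_ring
  have hUU : Uᴴ * U = 1 := by
    rw [hUconj, hU]
    exact unitary_aux Zg Xg P hZZ hXX hsq hZX hanti
  -- set membership helpers
  have hUmem : U ∈ ({U, Hg, Xg, Zg} : Set (Matrix (QReg (n + ℓ)) (QReg (n + ℓ)) ℂ)) :=
    Set.mem_insert _ _
  have hHmem : Hg ∈ ({U, Hg, Xg, Zg} : Set (Matrix (QReg (n + ℓ)) (QReg (n + ℓ)) ℂ)) :=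
    Set.mem_insert_of_mem _ (Set.mem_insert _ _)
  have hXmem : Xg ∈ ({U, Hg, Xg, Zg} : Set (Matrix (QReg (n + ℓ)) (QReg (n + ℓ)) ℂ)) :=
    Set.mem_insert_of_mem _ (Set.mem_insert_of_mem _ (Set.mem_insert _ _))
  -- sign
  set s : ℂ := (-1 : ℂ) ^ (a : ℕ) * ε with hs
  have hs2 : s * s = 1 := by
    have h1 : ((-1:ℂ)) ^ (a : ℕ) * ((-1:ℂ)) ^ (a : ℕ) = 1 := by
      rw [← mul_pow]; norm_num
    calc s * s = (((-1:ℂ)) ^ (a : ℕ) * ((-1:ℂ)) ^ (a : ℕ)) * (ε * ε) := by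
          rw [hs]; ring
      _ = 1 := by rw [h1, hε2, mul_one]
  -- P * Xg * P = ε • Xg
  have hPXP : P * Xg * P = ε • Xg := by
    rw [hPXc, smul_mul_assoc, mul_assoc, hsq, mul_one]
  -- the key vector computation
  have key : ∀ ψ : QReg n → ℂ,
      (Hg * U).mulVec ((projP P a).mulVec (embed n ℓ ψ))
        = (((Real.sqrt 2 : ℂ))⁻¹ * 2⁻¹) •
            ((1 + s) • embed n ℓ ψ + (1 - s) • Xg.mulVec (embed n ℓ ψ)) := by
    intro ψ
    set e := embed n ℓ ψ with he
    set Xe := Xg.mulVec e with hXe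
    have hZe : Zg.mulVec e = e := Z_embed k ψ
    have hZPe : Zg.mulVec (P.mulVec e) = -(P.mulVec e) := by
      rw [Matrix.mulVec_mulVec]
      have hZP : Zg * P = -(P * Zg) := by rw [hanti, neg_neg]
      rw [hZP, Matrix.neg_mulVec, ← Matrix.mulVec_mulVec, hZe]
    have hZXe : Zg.mulVec Xe = -Xe := by
      rw [hXe, Matrix.mulVec_mulVec, hZX, Matrix.neg_mulVec, ← Matrix.mulVec_mulVec, hZe]
    have hHe : Hg.mulVec e = ((Real.sqrt 2 : ℂ))⁻¹ • (e + Xe) :=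
      H_embed k e (fun v hv => embed_eq_zero k ψ v hv)
    have hHXe : Hg.mulVec Xe = ((Real.sqrt 2 : ℂ))⁻¹ • (e - Xe) := by
      rw [hXe, Matrix.mulVec_mulVec, hHX, ← Matrix.mulVec_mulVec, hHe,
        Matrix.mulVec_smul, Matrix.mulVec_add, hZe, hZXe]
      module
    have hUe : U.mulVec e = e := by
      rw [hU, Matrix.add_mulVec, Matrix.smul_mulVec, Matrix.add_mulVec,
        Matrix.one_mulVec, hZe, ← Matrix.mulVec_mulVec, Matrix.smul_mulVec,
        Matrix.sub_mulVec, Matrix.one_mulVec, hZe, sub_self, smul_zero,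
        Matrix.mulVec_zero]
      module
    have hUPe : U.mulVec (P.mulVec e) = ε • Xe := by
      rw [hU, Matrix.add_mulVec, Matrix.smul_mulVec, Matrix.add_mulVec,
        Matrix.one_mulVec, hZPe, add_neg_cancel, smul_zero, zero_add,
        ← Matrix.mulVec_mulVec, Matrix.smul_mulVec, Matrix.sub_mulVec,
        Matrix.one_mulVec, hZPe, sub_neg_eq_add]
      have h2 : (2⁻¹ : ℂ) • (P.mulVec e + P.mulVec e) = P.mulVec e := by module
      rw [h2, Matrix.mulVec_mulVec, hPXP, Matrix.smul_mulVec, ← hXe]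
    have hproj : (projP P a).mulVec e
        = (2⁻¹ : ℂ) • (e + ((-1:ℂ) ^ (a : ℕ)) • P.mulVec e) := by
      rw [projP, Matrix.smul_mulVec, Matrix.add_mulVec, Matrix.one_mulVec,
        Matrix.smul_mulVec]
    rw [← Matrix.mulVec_mulVec, hproj]
    simp only [Matrix.mulVec_smul, Matrix.mulVec_add, hUe, hUPe, hHe, hHXe, smul_add]
    rw [hs]
    module
  have hXXe : ∀ ψ : QReg n → ℂ, Xg.mulVec (Xg.mulVec (embed n ℓ ψ)) = embed n ℓ ψ := by
    intro ψ
    rw [Matrix.mulVec_mulVec, hXX, Matrix.one_mulVec]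
  rcases mul_self_eq_one_iff.mp hs2 with hs1 | hs1
  · refine ⟨Hg * U, ?_, ?_, ?_⟩
    · rw [conjTranspose_mul, hHher, mul_assoc, ← mul_assoc Hg Hg U, hHH, one_mul, hUU]
    · exact Submonoid.mul_mem _ (Submonoid.subset_closure hHmem)
        (Submonoid.subset_closure hUmem)
    · intro ψ _
      refine ⟨1, by simp, ?_⟩
      rw [key ψ, hs1]
      module
  · refine ⟨Xg * (Hg * U), ?_, ?_, ?_⟩
    · rw [conjTranspose_mul, hXher, mul_assoc, ← mul_assoc Xg Xg (Hg * U), hXX, one_mul,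
        conjTranspose_mul, hHher, mul_assoc, ← mul_assoc Hg Hg U, hHH, one_mul, hUU]
    · exact Submonoid.mul_mem _ (Submonoid.subset_closure hXmem)
        (Submonoid.mul_mem _ (Submonoid.subset_closure hHmem)
          (Submonoid.subset_closure hUmem))
    · intro ψ _
      refine ⟨1, by simp, ?_⟩
      rw [← Matrix.mulVec_mulVec, key ψ, hs1]
      simp only [Matrix.mulVec_smul, Matrix.mulVec_add, hXXe ψ]
      module
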